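/- (Flow Decomposition) Let N = (V, A, c) be a network, y, z ∈ V distinct and f a flow from y to z in N of value m ∈ ℕ₀. Then there exist a sequence γ = (γ_1, …, γ_m) of m paths from y to z in N, k ∈ ℕ₀ and a sequence w = (w_1, …, w_k) of k cycles in N such that f = Σ_{j∈[m]} χ_{γ_j} + Σ_{j∈[k]} χ_{w_j}. Moreover, for every such decomposition (γ, w) of f, the sequence γ is a sequence of m arc-disjoint paths from y to z in N. -/

import Mathlib

/-!
Networks on the complete digraph: capacities `c : V → V → ℕ` with no loops
(arcs are ordered pairs of distinct vertices; loops are given capacity 0).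
-/

structure Network (V : Type*) where
  c : V → V → ℕ
  no_loop : ∀ v, c v v = 0

namespace NetFlow

variable {V : Type*} [Fintype V] [DecidableEq V]

/-- `f` is a flow from `y` to `z` in `N`. -/
def IsFlow (N : Network V) (y z : V) (f : V → V → ℕ) : Prop :=
  (∀ u v, f u v ≤ N.c u v) ∧
  (∀ x, x ≠ y → x ≠ z → ∑ u, f u x = ∑ u, f x u)

/-- The value of a flow from `y`. -/
def flowValue (f : V → V → ℕ) (y : V) : ℤ :=
  (∑ u, (f y u : ℤ)) - ∑ u, (f u y : ℤ)

/-- The maximum flow value `φ^N_{yz}`. -/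
noncomputable def maxFlowValue (N : Network V) (y z : V) : ℕ :=
  sSup {m : ℕ | ∃ f, IsFlow N y z f ∧ flowValue f y = (m : ℤ)}

/-- `f` is a maximum flow from `y` to `z` in `N`. -/
def IsMaxFlow (N : Network V) (y z : V) (f : V → V → ℕ) : Prop :=
  IsFlow N y z f ∧ flowValue f y = (maxFlowValue N y z : ℤ)

/-- The network `N_X`: capacities of arcs incident to `X` are set to zero. -/
def removeVerts (N : Network V) (X : Finset V) : Network V where
  c u v := if u ∈ X ∨ v ∈ X then 0 else N.c u v
  no_loop v := by simp [N.no_loop v]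

/-- `φ^N_{yz}(X) = φ^N_{yz} - φ^{N_X}_{yz}`. -/
noncomputable def phiDrop (N : Network V) (y z : V) (X : Finset V) : ℤ :=
  (maxFlowValue N y z : ℤ) - (maxFlowValue (removeVerts N X) y z : ℤ)

/-- The (consecutive) arcs of a list of vertices. -/
def pathArcs (p : List V) : List (V × V) := p.zip p.tail

/-- `p` is a path from `y` to `z` in `N`: at least two distinct vertices, starting at `y`,
ending at `z`, with all consecutive arcs of positive capacity. -/
def IsPath (N : Network V) (y z : V) (p : List V) : Prop :=
  2 ≤ p.length ∧ p.Nodup ∧ p.head? = some y ∧ p.getLast? = some z ∧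
    p.Chain' fun u v => 1 ≤ N.c u v

/-- `p` is a cycle in `N`. -/
def IsCycle (N : Network V) (p : List V) : Prop :=
  3 ≤ p.length ∧ p.dropLast.Nodup ∧ p.head? = p.getLast? ∧
    p.Chain' fun u v => 1 ≤ N.c u v

/-- A sequence of arc-disjoint paths from `y` to `z` in `N`: each component is a path, and
each arc `a` is used by at most `c a` components. -/
def IsPathSeq (N : Network V) (y z : V) (γ : List (List V)) : Prop :=
  (∀ p ∈ γ, IsPath N y z p) ∧
  ∀ u v : V, γ.countP (fun p => decide ((u, v) ∈ pathArcs p)) ≤ N.c u v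

/-- `λ^N_{yz}`: the maximum length of a sequence of arc-disjoint paths from `y` to `z`. -/
noncomputable def maxSeqLen (N : Network V) (y z : V) : ℕ :=
  sSup {m : ℕ | ∃ γ : List (List V), IsPathSeq N y z γ ∧ γ.length = m}

/-- `M^N_{yz}`: the sequences of arc-disjoint paths from `y` to `z` of maximum length. -/
def MaxSeqs (N : Network V) (y z : V) : Set (List (List V)) :=
  {γ | IsPathSeq N y z γ ∧ γ.length = maxSeqLen N y z}

/-- `l_X(γ)`: the number of components of `γ` having a vertex in `X`. -/
def lX (X : Finset V) (γ : List (List V)) : ℕ :=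
  γ.countP fun p => p.any fun x => decide (x ∈ X)

/-- `λ^N_{yz}(X)`: the minimum of `l_X` over maximum-length sequences of arc-disjoint paths. -/
noncomputable def lambdaX (N : Network V) (y z : V) (X : Finset V) : ℕ :=
  sInf {n : ℕ | ∃ γ ∈ MaxSeqs N y z, lX X γ = n}

/-- The flow through a vertex: `f(x) = Σ_{a exiting x} f(a)` if `x ∉ {y,z}`, `v(f)` otherwise. -/
def vertexFlow (f : V → V → ℕ) (y z x : V) : ℤ :=
  if x = y ∨ x = z then flowValue f y else ∑ u, (f x u : ℤ)

/-- `δ^N_{yz}(X)`: the minimum of `f(X) = Σ_{x∈X} f(x)` over maximum flows `f`. -/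
noncomputable def deltaX (N : Network V) (y z : V) (X : Finset V) : ℕ :=
  sInf {n : ℕ | ∃ f, IsMaxFlow N y z f ∧ (∑ x ∈ X, vertexFlow f y z x) = (n : ℤ)}

/-- The flow `f_γ` associated with a sequence of arc-disjoint paths. -/
def seqFlow (γ : List (List V)) (u v : V) : ℕ :=
  γ.countP fun p => decide ((u, v) ∈ pathArcs p)

/-- The path (or cycle) function `χ_p` of a path or cycle `p`. -/
def chi (p : List V) (u v : V) : ℕ := (pathArcs p).count (u, v)

/-- `(γ, w)` is a decomposition of the flow `f`: `γ` is a sequence of `v(f)` paths from `y`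
to `z`, `w` a sequence of cycles, and `f = Σ_j χ_{γ_j} + Σ_j χ_{w_j}`. -/
def IsDecomposition (N : Network V) (y z : V) (f : V → V → ℕ)
    (γ w : List (List V)) : Prop :=
  (∀ p ∈ γ, IsPath N y z p) ∧ (∀ q ∈ w, IsCycle N q) ∧
  (γ.length : ℤ) = flowValue f y ∧
  ∀ u v : V, f u v = (γ.map fun p => chi p u v).sum + (w.map fun q => chi q u v).sum

/-- The forward arcs of a generalized path given by vertices `p` and directions `d`. -/
def forwardArcs (p : List V) (d : List Bool) : List (V × V) :=
  ((p.zip p.tail).zip d).filterMap fun e => if e.2 then some e.1 else none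

/-- The backward arcs of a generalized path given by vertices `p` and directions `d`. -/
def backwardArcs (p : List V) (d : List Bool) : List (V × V) :=
  ((p.zip p.tail).zip d).filterMap fun e => if e.2 then none else some (e.1.2, e.1.1)

/-- `(p, d)` is a generalized path from `y` to `z`: distinct vertices `x_1 = y, …, x_m = z`
(`m ≥ 2`), the `i`-th arc being `(x_i, x_{i+1})` (forward, `d_i = true`) or `(x_{i+1}, x_i)`
(backward, `d_i = false`). -/
def IsGenPath (y z : V) (p : List V) (d : List Bool) : Prop :=
  2 ≤ p.length ∧ p.Nodup ∧ p.head? = some y ∧ p.getLast? = some z ∧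
    d.length + 1 = p.length

/-- `(p, d)` is an augmenting path for `f` from `y` to `z` in `N`. -/
def IsAugPath (N : Network V) (y z : V) (f : V → V → ℕ)
    (p : List V) (d : List Bool) : Prop :=
  IsGenPath y z p d ∧
  (∀ a ∈ forwardArcs p d, f a.1 a.2 < N.c a.1 a.2) ∧
  (∀ a ∈ backwardArcs p d, 1 ≤ f a.1 a.2)

/-- `χ_σ` for a generalized path `σ = (p, d)`: `+1` on forward arcs, `-1` on backward arcs. -/
def chiGen (p : List V) (d : List Bool) (u v : V) : ℤ :=
  ((forwardArcs p d).count (u, v) : ℤ) - ((backwardArcs p d).count (u, v) : ℤ)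

/-- The full flow vitality group centrality measure `φ^N(X)`. -/
noncomputable def phiGC (N : Network V) (X : Finset V) : ℝ :=
  ∑ a ∈ Finset.univ.filter (fun a : V × V => a.1 ≠ a.2 ∧ 0 < maxFlowValue N a.1 a.2),
    (phiDrop N a.1 a.2 X : ℝ) / (maxFlowValue N a.1 a.2 : ℝ)

/-- The full flow betweenness group centrality measure `λ^N(X)`. -/
noncomputable def lambdaGC (N : Network V) (X : Finset V) : ℝ :=
  ∑ a ∈ Finset.univ.filter (fun a : V × V => a.1 ≠ a.2 ∧ 0 < maxFlowValue N a.1 a.2),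
    (lambdaX N a.1 a.2 X : ℝ) / (maxFlowValue N a.1 a.2 : ℝ)

end NetFlow

/-!
Peel the flow apart one path or cycle at a time. Every vertex other than `z` has at least as
much outflow as inflow, so a walk along arcs of positive flow that never repeats a vertex, started
at `y` (or, for a flow of value `0`, anywhere), either closes a cycle or gets stuck, and it can
only get stuck at `z`. Subtracting the path function of the resulting `y`-`z` path lowers the
value by one, subtracting the cycle function keeps it, and either way the total of the flow drops,
so induction on that total yields the decomposition. Conversely, the number of paths of a
decomposition through an arc `a` is at most the sum of their path functions at `a`, which is at
most `f a ≤ c a`.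
-/

namespace NetFlow

section Arcs

variable {V : Type*}

lemma pathArcs_eq_zip_dropLast (p : List V) : pathArcs p = p.dropLast.zip p.tail := by
  induction p with
  | nil => rfl
  | cons a t ih =>
    cases t with
    | nil => rfl
    | cons b s =>
      simp only [pathArcs, List.zip_cons_cons, List.tail_cons, List.dropLast_cons_cons] at *
      rw [ih]

lemma map_fst_pathArcs (p : List V) : (pathArcs p).map Prod.fst = p.dropLast := by
  rw [pathArcs_eq_zip_dropLast]
  exact List.map_fst_zip (by simp)

lemma map_snd_pathArcs (p : List V) : (pathArcs p).map Prod.snd = p.tail :=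
  List.map_snd_zip (by simp)

lemma rel_of_mem_pathArcs {R : V → V → Prop} {p : List V} (hc : p.IsChain R) {u v : V}
    (h : (u, v) ∈ pathArcs p) : R u v := by
  rw [pathArcs_eq_zip_dropLast] at h
  exact List.forall₂_zip (List.isChain_iff_forall₂.1 hc) h

variable [DecidableEq V]

lemma chi_le_one {p : List V} (h : p.dropLast.Nodup) (u v : V) : chi p u v ≤ 1 := by
  rw [← map_fst_pathArcs] at h
  exact List.nodup_iff_count_le_one.1 (h.of_map Prod.fst) (u, v)

lemma chi_le_of_chain {g : V → V → ℕ} {p : List V} (hnd : p.dropLast.Nodup)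
    (hc : p.IsChain fun u v => 1 ≤ g u v) : chi p ≤ g := by
  intro u v
  by_cases h : (u, v) ∈ pathArcs p
  · exact (chi_le_one hnd u v).trans (rel_of_mem_pathArcs hc h)
  · simp [chi, List.count_eq_zero_of_not_mem h]

lemma countP_mem_pathArcs_le_sum_chi (l : List (List V)) (u v : V) :
    l.countP (fun p => decide ((u, v) ∈ pathArcs p)) ≤ (l.map fun p => chi p u v).sum := by
  induction l with
  | nil => simp
  | cons p t ih =>
    rw [List.countP_cons, List.map_cons, List.sum_cons]
    have : (if decide ((u, v) ∈ pathArcs p) then 1 else 0) ≤ chi p u v := by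
      split_ifs with h
      · exact List.count_pos_iff.2 (of_decide_eq_true h)
      · exact Nat.zero_le _
    omega

lemma chi_ne_zero {p : List V} (hp : 2 ≤ p.length) : chi p ≠ 0 := by
  match p, hp with
  | a :: b :: t, _ =>
    intro h
    have hab : (a, b) ∈ pathArcs (a :: b :: t) := List.mem_cons_self
    exact (List.count_pos_iff.2 hab).ne' (congrFun₂ h a b)

end Arcs

section NetOut

variable {V : Type*} [Fintype V]

def netOut (g : V → V → ℕ) (x : V) : ℤ := ∑ u, (g x u : ℤ) - ∑ u, (g u x : ℤ)

lemma netOut_eq_zero_iff {g : V → V → ℕ} {x : V} :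
    netOut g x = 0 ↔ ∑ u, g u x = ∑ u, g x u := by
  rw [netOut, sub_eq_zero, eq_comm]
  exact_mod_cast Iff.rfl

lemma netOut_sub {f g : V → V → ℕ} (hle : g ≤ f) (x : V) :
    netOut (f - g) x = netOut f x - netOut g x := by
  have hcast (u v : V) : (((f - g) u v : ℕ) : ℤ) = f u v - g u v := Nat.cast_sub (hle u v)
  simp only [netOut, hcast, Finset.sum_sub_distrib]
  ring

lemma sum_netOut (g : V → V → ℕ) : ∑ x, netOut g x = 0 := by
  simp only [netOut, Finset.sum_sub_distrib]
  rw [Finset.sum_comm, sub_self]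

lemma sum_sum_sub_lt {f g : V → V → ℕ} (hle : g ≤ f) (hg : g ≠ 0) :
    ∑ u, ∑ v, (f - g) u v < ∑ u, ∑ v, f u v := by
  obtain ⟨a, b, hab⟩ : ∃ a b, g a b ≠ 0 := by
    by_contra! h
    exact hg (funext₂ h)
  refine Finset.sum_lt_sum (fun u _ => Finset.sum_le_sum fun v _ => Nat.sub_le _ _)
    ⟨a, Finset.mem_univ a,
      Finset.sum_lt_sum (fun v _ => Nat.sub_le _ _) ⟨b, Finset.mem_univ b, ?_⟩⟩
  have hpos := Nat.pos_of_ne_zero hab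
  exact Nat.sub_lt (hpos.trans_le (hle a b)) hpos

variable [DecidableEq V]

lemma sum_count_mk_right (l : List (V × V)) (x : V) :
    ∑ u, l.count (x, u) = (l.map Prod.fst).count x := by
  induction l with
  | nil => simp
  | cons a t ih =>
    simp only [List.count_cons, List.map_cons, Finset.sum_add_distrib, ih, beq_iff_eq,
      Prod.ext_iff]
    split_ifs <;> simp_all

lemma sum_count_mk_left (l : List (V × V)) (x : V) :
    ∑ u, l.count (u, x) = (l.map Prod.snd).count x := by
  induction l with
  | nil => simp
  | cons a t ih =>
    simp only [List.count_cons, List.map_cons, Finset.sum_add_distrib, ih, beq_iff_eq,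
      Prod.ext_iff]
    split_ifs <;> simp_all [and_comm]

lemma netOut_chi (p : List V) (x : V) :
    netOut (chi p) x = p.dropLast.count x - p.tail.count x := by
  simp only [netOut, chi]
  rw [← Nat.cast_sum, ← Nat.cast_sum, sum_count_mk_right, sum_count_mk_left, map_fst_pathArcs,
    map_snd_pathArcs]

lemma netOut_chi_of_ne_nil {p : List V} (hp : p ≠ []) (x : V) :
    netOut (chi p) x = (if p.head hp = x then 1 else 0) - (if p.getLast hp = x then 1 else 0) := by
  have htail : p.count x = p.tail.count x + if p.head hp = x then 1 else 0 := by
    obtain ⟨a, t, rfl⟩ := List.exists_cons_of_ne_nil hp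
    simp only [List.count_cons, List.head_cons, List.tail_cons, beq_iff_eq]
    congr 1
  have hdropLast : p.count x = p.dropLast.count x + if p.getLast hp = x then 1 else 0 := by
    conv_lhs => rw [← List.dropLast_append_getLast hp]
    simp [List.count_append, List.count_singleton]
  rw [netOut_chi]
  split_ifs at * <;> push_cast <;> omega

end NetOut

section PathsCycles

variable {V : Type*} {M N : Network V} {y z : V} {p : List V}

lemma IsPath.ne_nil (hp : IsPath M y z p) : p ≠ [] :=
  List.ne_nil_of_length_pos (by have := hp.1; omega)

lemma IsPath.head_eq (hp : IsPath M y z p) : p.head hp.ne_nil = y :=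
  Option.some.inj ((List.head?_eq_some_head hp.ne_nil).symm.trans hp.2.2.1)

lemma IsPath.getLast_eq (hp : IsPath M y z p) : p.getLast hp.ne_nil = z :=
  Option.some.inj ((List.getLast?_eq_some_getLast hp.ne_nil).symm.trans hp.2.2.2.1)

lemma IsPath.ne (hp : IsPath M y z p) : y ≠ z := by
  intro hyz
  have h := hp.head_eq.trans (hyz.trans hp.getLast_eq.symm)
  rw [List.head_eq_getElem, List.getLast_eq_getElem, hp.2.1.getElem_inj_iff] at h
  have := hp.1
  omega

lemma IsCycle.ne_nil (hq : IsCycle M p) : p ≠ [] :=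
  List.ne_nil_of_length_pos (by have := hq.1; omega)

lemma IsCycle.head_eq_getLast (hq : IsCycle M p) : p.head hq.ne_nil = p.getLast hq.ne_nil :=
  Option.some.inj <| (List.head?_eq_some_head _).symm.trans <|
    hq.2.2.1.trans (List.getLast?_eq_some_getLast _)

lemma IsPath.mono (hMN : ∀ u v, M.c u v ≤ N.c u v) (hp : IsPath M y z p) : IsPath N y z p :=
  ⟨hp.1, hp.2.1, hp.2.2.1, hp.2.2.2.1, hp.2.2.2.2.imp fun {_ _} h => h.trans (hMN _ _)⟩

lemma IsCycle.mono (hMN : ∀ u v, M.c u v ≤ N.c u v) (hq : IsCycle M p) : IsCycle N p :=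
  ⟨hq.1, hq.2.1, hq.2.2.1, hq.2.2.2.imp fun {_ _} h => h.trans (hMN _ _)⟩

lemma exists_isCycle_of_mem {v : V} (hp : p ≠ []) (hnd : p.Nodup)
    (hch : p.IsChain fun u v => 1 ≤ M.c u v) (hvp : v ∈ p) (hv : 1 ≤ M.c (p.getLast hp) v) :
    ∃ q, IsCycle M q := by
  obtain ⟨s, t, rfl⟩ := List.append_of_mem hvp
  have hlast : (s ++ v :: t).getLast hp = (v :: t).getLast (List.cons_ne_nil v t) :=
    List.getLast_append_of_ne_nil hp (List.cons_ne_nil v t)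
  have ht : t ≠ [] := by
    rintro rfl
    simp [hlast, M.no_loop] at hv
  refine ⟨v :: t ++ [v], ?_, ?_, by rw [List.getLast?_concat]; rfl, ?_⟩
  · have := List.length_pos_iff.2 ht
    simp only [List.length_append, List.length_cons]
    omega
  · rw [List.dropLast_concat]
    exact hnd.sublist (List.sublist_append_right s _)
  · refine hch.right_of_append.append (.singleton v) fun a ha b hb => ?_
    rw [List.getLast?_eq_some_getLast (List.cons_ne_nil v t), ← hlast] at ha
    simp only [Option.mem_def, Option.some.injEq, List.head?_cons] at ha hb
    exact ha ▸ hb ▸ hv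

variable [DecidableEq V]

lemma IsPath.chi_le (hp : IsPath M y z p) : chi p ≤ M.c :=
  chi_le_of_chain (hp.2.1.sublist (List.dropLast_sublist p)) hp.2.2.2.2

lemma IsCycle.chi_le (hq : IsCycle M p) : chi p ≤ M.c :=
  chi_le_of_chain hq.2.1 hq.2.2.2

variable [Fintype V]

lemma IsPath.netOut_chi (hp : IsPath M y z p) (x : V) :
    netOut (chi p) x = (if y = x then 1 else 0) - (if z = x then 1 else 0) := by
  rw [netOut_chi_of_ne_nil hp.ne_nil, hp.head_eq, hp.getLast_eq]

lemma IsCycle.netOut_chi (hq : IsCycle M p) (x : V) : netOut (chi p) x = 0 := by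
  rw [netOut_chi_of_ne_nil hq.ne_nil, hq.head_eq_getLast, sub_self]

end PathsCycles

section Walk

variable {V : Type*} [Fintype V]

theorem exists_isCycle_or_isPath_of_isChain (M : Network V) (p : List V) (hp : p ≠ [])
    (hnd : p.Nodup) (hch : p.IsChain fun u v => 1 ≤ M.c u v)
    (hout : ∃ v, 1 ≤ M.c (p.getLast hp) v) :
    (∃ q, IsCycle M q) ∨ ∃ q t, IsPath M (p.head hp) t q ∧ netOut M.c t < 0 := by
  obtain ⟨v, hv⟩ := hout
  by_cases hvp : v ∈ p
  · exact .inl (exists_isCycle_of_mem hp hnd hch hvp hv)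
  have hnd' : (p ++ [v]).Nodup := hnd.append (List.nodup_singleton v) (by simpa using hvp)
  have hch' : (p ++ [v]).IsChain fun u v => 1 ≤ M.c u v :=
    hch.append (.singleton v) (by simpa [List.getLast?_eq_some_getLast hp] using hv)
  have hhead : (p ++ [v]).head (by simp) = p.head hp := List.head_append_of_ne_nil hp
  by_cases hout' : ∃ u, 1 ≤ M.c v u
  · have := exists_isCycle_or_isPath_of_isChain M (p ++ [v]) (by simp) hnd' hch' (by simpa)
    rwa [hhead] at this
  · push Not at hout'
    have hin : (1 : ℤ) ≤ ∑ u, (M.c u v : ℤ) := by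
      exact_mod_cast hv.trans (Finset.single_le_sum (fun u _ => Nat.zero_le (M.c u v))
        (Finset.mem_univ (p.getLast hp)))
    refine .inr ⟨p ++ [v], v, ⟨?_, hnd', ?_, by simp, hch'⟩, ?_⟩
    · have := List.length_pos_iff.2 hp
      simp only [List.length_append, List.length_singleton]
      omega
    · rw [List.head?_append_of_ne_nil _ hp, List.head?_eq_some_head hp]
    · simp only [netOut, Nat.lt_one_iff.1 (hout' _), Nat.cast_zero, Finset.sum_const_zero]
      omega
termination_by Fintype.card V - p.length
decreasing_by
  have := hnd'.length_le_card
  simp only [List.length_append, List.length_singleton] at this ⊢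
  omega

end Walk

section Flows

variable {V : Type*} [Fintype V] {N : Network V} {y z : V} {f : V → V → ℕ}

lemma flowValue_eq_netOut : flowValue f y = netOut f y := rfl

lemma flowValue_sub {g : V → V → ℕ} (hle : g ≤ f) :
    flowValue (f - g) y = flowValue f y - netOut g y :=
  netOut_sub hle y

lemma exists_one_le_of_netOut_pos {x : V} (h : 0 < netOut f x) : ∃ v, 1 ≤ f x v := by
  by_contra! hzero
  simp only [netOut, Nat.lt_one_iff.1 (hzero _), Nat.cast_zero, Finset.sum_const_zero,
    zero_sub, Left.neg_pos_iff] at h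
  exact h.not_ge (Finset.sum_nonneg fun u _ => Nat.cast_nonneg _)

lemma IsFlow.netOut_eq_zero (hf : IsFlow N y z f) {x : V} (hy : x ≠ y) (hz : x ≠ z) :
    netOut f x = 0 :=
  netOut_eq_zero_iff.2 (hf.2 x hy hz)

lemma IsFlow.netOut_target (hf : IsFlow N y z f) (hyz : y ≠ z) :
    netOut f z = -flowValue f y := by
  have h := sum_netOut f
  rw [Fintype.sum_eq_add y z hyz fun x hx => hf.netOut_eq_zero hx.1 hx.2] at h
  rw [flowValue_eq_netOut]
  linarith

lemma IsFlow.sub (hf : IsFlow N y z f) {g : V → V → ℕ} (hle : g ≤ f)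
    (hg : ∀ x, x ≠ y → x ≠ z → netOut g x = 0) : IsFlow N y z (f - g) :=
  ⟨fun u v => (Nat.sub_le _ _).trans (hf.1 u v), fun x hy hz => netOut_eq_zero_iff.1 <| by
    rw [netOut_sub hle, hf.netOut_eq_zero hy hz, hg x hy hz, sub_zero]⟩

/-- Its paths and cycles are those of `N` along which `f` is positive. -/
def IsFlow.toNetwork (hf : IsFlow N y z f) : Network V where
  c := f
  no_loop v := Nat.eq_zero_of_le_zero ((hf.1 v v).trans_eq (N.no_loop v))

/-- A walk along positive arcs of a flow of nonnegative value can only get stuck at `z`. -/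
lemma IsFlow.exists_isCycle_or_isPath (hf : IsFlow N y z f) (hv : 0 ≤ flowValue f y)
    (hf0 : f ≠ 0) :
    (∃ q, IsCycle hf.toNetwork q) ∨ 0 < flowValue f y ∧ ∃ p, IsPath hf.toNetwork y z p := by
  have hdeficit : ∀ t, netOut f t < 0 → t = z ∧ 0 < flowValue f y := by
    intro t ht
    have hty : t ≠ y := by
      rintro rfl
      exact ht.not_ge hv
    have htz : t = z := by
      by_contra htz
      exact ht.ne (hf.netOut_eq_zero hty htz)
    subst htz
    have := hf.netOut_target (Ne.symm hty)
    exact ⟨rfl, by linarith⟩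
  obtain ⟨s, hs, hsy⟩ : ∃ s, (∃ v, 1 ≤ f s v) ∧ (0 < flowValue f y → s = y) := by
    by_cases hpos : 0 < flowValue f y
    · exact ⟨y, exists_one_le_of_netOut_pos hpos, fun _ => rfl⟩
    · obtain ⟨u, v, huv⟩ : ∃ u v, f u v ≠ 0 := by
        by_contra! h
        exact hf0 (funext₂ h)
      exact ⟨u, ⟨v, Nat.one_le_iff_ne_zero.2 huv⟩, fun h => absurd h hpos⟩
  rcases exists_isCycle_or_isPath_of_isChain hf.toNetwork [s] (List.cons_ne_nil s [])
    (List.nodup_singleton s) (.singleton s) hs with hq | ⟨q, t, hq, ht⟩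
  · exact .inl hq
  · obtain ⟨rfl, hpos⟩ := hdeficit t ht
    exact .inr ⟨hpos, q, hsy hpos ▸ hq⟩

end Flows

section Decomposition

variable {V : Type*} [Fintype V] [DecidableEq V] {N : Network V} {y z : V} {γ w : List (List V)}

lemma IsDecomposition.cons_cycle {f : V → V → ℕ} {q : List V}
    (hd : IsDecomposition N y z (f - chi q) γ w) (hq : IsCycle N q) (hle : chi q ≤ f) :
    IsDecomposition N y z f γ (q :: w) := by
  obtain ⟨hγ, hw, hlen, hsum⟩ := hd
  refine ⟨hγ, List.forall_mem_cons.2 ⟨hq, hw⟩, ?_, fun u v => ?_⟩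
  · rw [hlen, flowValue_sub hle, hq.netOut_chi, sub_zero]
  · have := hsum u v
    have := hle u v
    simp only [Pi.sub_apply, List.map_cons, List.sum_cons] at *
    omega

lemma IsDecomposition.cons_path {f : V → V → ℕ} {p : List V}
    (hd : IsDecomposition N y z (f - chi p) γ w) (hp : IsPath N y z p) (hle : chi p ≤ f) :
    IsDecomposition N y z f (p :: γ) w := by
  obtain ⟨hγ, hw, hlen, hsum⟩ := hd
  refine ⟨List.forall_mem_cons.2 ⟨hp, hγ⟩, hw, ?_, fun u v => ?_⟩
  · rw [List.length_cons, Nat.cast_succ, hlen, flowValue_sub hle, hp.netOut_chi,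
      if_pos rfl, if_neg hp.ne.symm]
    ring
  · have := hsum u v
    have := hle u v
    simp only [Pi.sub_apply, List.map_cons, List.sum_cons] at *
    omega

theorem IsFlow.exists_isDecomposition {f : V → V → ℕ} (hf : IsFlow N y z f)
    (hv : 0 ≤ flowValue f y) :
    ∃ γ w, IsDecomposition N y z f γ w := by
  by_cases hf0 : f = 0
  · subst hf0
    exact ⟨[], [], by simp, by simp, by simp [flowValue], by simp⟩
  rcases hf.exists_isCycle_or_isPath hv hf0 with ⟨q, hq⟩ | ⟨hpos, p, hp⟩
  · have hle : chi q ≤ f := hq.chi_le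
    have hf' := hf.sub hle fun x _ _ => hq.netOut_chi x
    have hv' : 0 ≤ flowValue (f - chi q) y := by
      rwa [flowValue_sub hle, hq.netOut_chi, sub_zero]
    obtain ⟨γ, w, hd⟩ := hf'.exists_isDecomposition hv'
    exact ⟨γ, q :: w, hd.cons_cycle (hq.mono hf.1) hle⟩
  · have hle : chi p ≤ f := hp.chi_le
    have hf' := hf.sub hle fun x hy hz => by
      rw [hp.netOut_chi, if_neg (Ne.symm hy), if_neg (Ne.symm hz), sub_zero]
    have hv' : 0 ≤ flowValue (f - chi p) y := by
      rw [flowValue_sub hle, hp.netOut_chi, if_pos rfl, if_neg hp.ne.symm]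
      linarith
    obtain ⟨γ, w, hd⟩ := hf'.exists_isDecomposition hv'
    exact ⟨p :: γ, w, hd.cons_path (hp.mono hf.1) hle⟩
termination_by ∑ u, ∑ v, f u v
decreasing_by
  · exact sum_sum_sub_lt hle (chi_ne_zero (by have := hq.1; omega))
  · exact sum_sum_sub_lt hle (chi_ne_zero hp.1)

lemma IsDecomposition.isPathSeq {f : V → V → ℕ} (hd : IsDecomposition N y z f γ w)
    (hfc : ∀ u v, f u v ≤ N.c u v) : IsPathSeq N y z γ :=
  ⟨hd.1, fun u v => (countP_mem_pathArcs_le_sum_chi γ u v).trans <|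
    (hd.2.2.2 u v ▸ Nat.le_add_right _ _).trans (hfc u v)⟩

end Decomposition

end NetFlow

theorem flow_decomposition_general {V : Type*} [Fintype V] [DecidableEq V]
    (N : Network V) (y z : V)
    (f : V → V → ℕ) (hf : NetFlow.IsFlow N y z f) (m : ℕ)
    (hm : NetFlow.flowValue f y = (m : ℤ)) :
    (∃ γ w : List (List V), γ.length = m ∧ NetFlow.IsDecomposition N y z f γ w) ∧
      ∀ γ w : List (List V), NetFlow.IsDecomposition N y z f γ w →
        NetFlow.IsPathSeq N y z γ ∧ γ.length = m := by
  have hlength : ∀ γ w, NetFlow.IsDecomposition N y z f γ w → γ.length = m :=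
    fun γ w hd => by exact_mod_cast hd.2.2.1.trans hm
  obtain ⟨γ, w, hd⟩ := hf.exists_isDecomposition (hm ▸ Nat.cast_nonneg m)
  exact ⟨⟨γ, w, hlength γ w hd, hd⟩,
    fun γ w hd => ⟨hd.isPathSeq hf.1, hlength γ w hd⟩⟩

/-- Flow Decomposition: every flow `f` from `y` to `z` of value `m` admits a
decomposition into `m` paths from `y` to `z` and finitely many cycles; moreover, for every
decomposition `(γ, w)` of `f`, the sequence `γ` is a sequence of `m` arc-disjoint paths. -/
theorem flow_decomposition {V : Type*} [Fintype V] [DecidableEq V]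
    (hV : 2 ≤ Fintype.card V) (N : Network V) (y z : V) (hyz : y ≠ z)
    (f : V → V → ℕ) (hf : NetFlow.IsFlow N y z f) (m : ℕ)
    (hm : NetFlow.flowValue f y = (m : ℤ)) :
    (∃ γ w : List (List V), γ.length = m ∧ NetFlow.IsDecomposition N y z f γ w) ∧
      ∀ γ w : List (List V), NetFlow.IsDecomposition N y z f γ w →
        NetFlow.IsPathSeq N y z γ ∧ γ.length = m :=
  flow_decomposition_general N y z f hf m hm
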